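/- For every automorphism φ of a finitely generated free group F with basis A, and every u ∈ F, the image φ(C¹_u) of the cylinder C¹_u under the induced boundary homeomorphism is a finite union of cylinders: there exists a finite set U ⊂ F with φ(C¹_u) = ⋃_{u' ∈ U} C¹_{u'}. -/

import Mathlib

open List

variable {A : Type*} [Fintype A] [DecidableEq A]

/-- The formal inverse of a letter in `A ∪ A⁻¹`, encoded as `A × Bool`. -/
def Linv (x : A × Bool) : A × Bool := (x.1, !x.2)

/-- A finite word is reduced if no letter is followed by its inverse. -/
def RedWord (w : List (A × Bool)) : Prop := w.Chain' (fun x y => y ≠ Linv x)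

/-- An infinite word is reduced if no letter is followed by its inverse. -/
def InfRed (X : ℕ → A × Bool) : Prop := ∀ n, X (n + 1) ≠ Linv (X n)

/-- The boundary `∂F(A)`: the set of infinite reduced words. -/
abbrev Bdry (A : Type*) := {X : ℕ → A × Bool // InfRed X}

/-- The prefix of length `n` of an infinite word. -/
def wpre (X : ℕ → A × Bool) (n : ℕ) : List (A × Bool) := (List.range n).map X

/-- The word length `|g|_A` of an element of the free group. -/
def wlen (g : FreeGroup A) : ℕ := (FreeGroup.toWord g).length

/-- The cylinder `C¹_g` for a group element `g`, via its reduced word. -/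
def CylF (g : FreeGroup A) : Set (Bdry A) := {X | wpre X.val (wlen g) = g.toWord}

/-- The cylinder `C¹_l` for a (reduced) word `l`. -/
def CylL (l : List (A × Bool)) : Set (Bdry A) := {X | wpre X.val l.length = l}

/-- `w|_k` : erase the last `k` letters of the word `w`. -/
def del (l : List (A × Bool)) (k : ℕ) : List (A × Bool) := l.take (l.length - k)

/-- `u|^k` : the set of reduced words obtained from `u` by appending `k` letters. -/
def extW (u : List (A × Bool)) (k : ℕ) : Set (List (A × Bool)) :=
  {v | RedWord v ∧ u <+: v ∧ v.length = u.length + k}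

/-- The size `S(φ)`: the maximum of `|φ(a)|` and `|φ⁻¹(a)|` over all `a ∈ A`. -/
def fsize (φ : FreeGroup A ≃* FreeGroup A) : ℕ :=
  Finset.univ.sup fun a : A =>
    max (wlen (φ (FreeGroup.of a))) (wlen (φ.symm (FreeGroup.of a)))

/-- The bounded cancellation constant `C(φ)`: the least `C` with
`|φ(u)| + |φ(v)| ≤ |φ(uv)| + C` for all `u, v`. -/
noncomputable def fcancel (φ : FreeGroup A ≃* FreeGroup A) : ℕ :=
  sInf {C | ∀ u v : FreeGroup A, wlen (φ u) + wlen (φ v) ≤ wlen (φ (u * v)) + C}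

/-- The graph of the continuous extension of `f` to the boundary:
`Y` is the limit of the words `f(X|_m)` as `m → ∞`. -/
def LimMap (f : FreeGroup A → FreeGroup A) (X Y : ℕ → A × Bool) : Prop :=
  ∀ n, ∃ m₀, ∀ m ≥ m₀, ((f (FreeGroup.mk (wpre X m))).toWord.take n) = wpre Y n

/-- The image of a subset of the boundary under the boundary extension of `f`. -/
def bim (f : FreeGroup A → FreeGroup A) (S : Set (Bdry A)) : Set (Bdry A) :=
  {Y | ∃ X ∈ S, LimMap f X.val Y.val}

/-!
Let `S` bound the word lengths of `φ` and `φ⁻¹` on the generators, so that both are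
`S`-Lipschitz for the word metric. In the Cayley tree, a path with jumps of length at most `S`
from `1` to a reduced product `g * h` passes within `S` of `g`; applied to the pull-back of the
prefixes of `φ (g * h)` this gives bounded cancellation with constant `2 S²`. Hence the prefixes of
`φ (X|m)` stabilise, which defines the boundary map, and the boundary map of `φ⁻¹` inverts it.
So the first `|u|` letters of `φ⁻¹ Y` only depend on the first `M = S (|u| + S²)` letters of `Y`,
and `φ (C¹_u)` is the union of the (finitely many) cylinders of length `M` that it contains.
-/

open FreeGroup

namespace FreeGroup

variable {α β : Type*} [DecidableEq α] [DecidableEq β]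

theorem IsReduced.toWord_mk {L : List (α × Bool)} (h : IsReduced L) : (mk L).toWord = L := by
  rw [FreeGroup.toWord_mk, h.reduce_eq]

theorem IsReduced.norm_mk {L : List (α × Bool)} (h : IsReduced L) : (mk L).norm = L.length := by
  rw [norm, h.toWord_mk]

theorem IsReduced.invRev {L : List (α × Bool)} (h : IsReduced L) :
    IsReduced (FreeGroup.invRev L) := by
  rw [isReduced_iff_reduce_eq, reduce_invRev, h.reduce_eq]

theorem IsReduced.exists_common_prefix :
    ∀ {a b : List (α × Bool)}, IsReduced a → IsReduced b →
      ∃ p a' b', a = p ++ a' ∧ b = p ++ b' ∧ IsReduced (FreeGroup.invRev a' ++ b')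
  | [], b, _, hb => ⟨[], [], b, rfl, rfl, by simpa [FreeGroup.invRev] using hb⟩
  | x :: a, [], ha, _ => ⟨[], x :: a, [], rfl, rfl, by simpa using ha.invRev⟩
  | x :: a, y :: b, ha, hb => by
    by_cases hxy : x = y
    · subst hxy
      obtain ⟨p, a', b', rfl, rfl, h⟩ := exists_common_prefix
        (ha.infix (List.suffix_cons x a).isInfix) (hb.infix (List.suffix_cons x b).isInfix)
      exact ⟨x :: p, a', b', rfl, rfl, h⟩
    · refine ⟨[], x :: a, y :: b, rfl, rfl, ?_⟩
      rw [invRev_cons]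
      refine IsReduced.append_overlap (by rw [← invRev_cons]; exact ha.invRev) ?_
        (by simp [FreeGroup.invRev])
      obtain ⟨x₁, x₂⟩ := x
      obtain ⟨y₁, y₂⟩ := y
      simp only [FreeGroup.invRev, List.reverse_singleton, List.map_cons, List.map_nil,
        List.singleton_append, isReduced_cons_cons]
      refine ⟨fun h₁ => ?_, hb⟩
      cases x₂ <;> cases y₂ <;> simp_all

theorem norm_le_add_norm_inv_mul (x y : FreeGroup α) : y.norm ≤ x.norm + (x⁻¹ * y).norm := by
  simpa using norm_mul_le x (x⁻¹ * y)

theorem norm_inv_mul_comm (x y : FreeGroup α) : (x⁻¹ * y).norm = (y⁻¹ * x).norm := by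
  rw [← norm_inv_eq, mul_inv_rev, inv_inv]

theorem norm_inv_mul_le_add_norm_inv_mul (x y z : FreeGroup α) :
    (y⁻¹ * z).norm ≤ (x⁻¹ * y).norm + (x⁻¹ * z).norm := by
  calc (y⁻¹ * z).norm = ((x⁻¹ * y)⁻¹ * (x⁻¹ * z)).norm := by group
    _ ≤ (x⁻¹ * y)⁻¹.norm + (x⁻¹ * z).norm := norm_mul_le _ _
    _ = (x⁻¹ * y).norm + (x⁻¹ * z).norm := by rw [norm_inv_eq]

theorem norm_inv_mul_mk_of_prefix {a b : List (α × Bool)} (hab : a <+: b) (hb : IsReduced b) :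
    ((mk a)⁻¹ * mk b).norm = b.length - a.length := by
  obtain ⟨r, rfl⟩ := hab
  rw [← mul_mk, inv_mul_cancel_left, (hb.infix (List.suffix_append a r).isInfix).norm_mk,
    List.length_append]
  omega

/-- In the Cayley tree, the Gromov product `(x | y)₁ = (|x| + |y| - |x⁻¹y|) / 2` bounds the
length of the common prefix of the reduced words of `x` and `y` from below. -/
theorem take_toWord_eq_of_le {x y : FreeGroup α} {n : ℕ}
    (h : 2 * n + (x⁻¹ * y).norm ≤ x.norm + y.norm) : x.toWord.take n = y.toWord.take n := by
  obtain ⟨p, a, b, hx, hy, hab⟩ :=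
    IsReduced.exists_common_prefix (isReduced_toWord (x := x)) (isReduced_toWord (x := y))
  have hxy : x⁻¹ * y = mk (FreeGroup.invRev a ++ b) := by
    calc x⁻¹ * y = (mk (p ++ a))⁻¹ * mk (p ++ b) := by rw [← hx, ← hy, mk_toWord, mk_toWord]
      _ = (mk a)⁻¹ * mk b := by rw [← mul_mk, ← mul_mk]; group
      _ = mk (FreeGroup.invRev a ++ b) := by rw [inv_mk, mul_mk]
  have hlen : n ≤ p.length := by
    rw [hxy, hab.norm_mk, norm, norm, hx, hy] at h
    simp only [List.length_append, invRev_length] at h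
    omega
  rw [hx, hy, List.take_append_of_le_length hlen, List.take_append_of_le_length hlen]

theorem two_mul_add_norm_inv_mul_le {x y : FreeGroup α} {n : ℕ}
    (h : x.toWord.take n = y.toWord.take n) (hx : n ≤ x.norm) (hy : n ≤ y.norm) :
    2 * n + (x⁻¹ * y).norm ≤ x.norm + y.norm := by
  have hsplit (z : FreeGroup α) : z = mk (z.toWord.take n) * mk (z.toWord.drop n) := by
    rw [mul_mk, List.take_append_drop, mk_toWord]
  have hxy : x⁻¹ * y = (mk (x.toWord.drop n))⁻¹ * mk (y.toWord.drop n) := by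
    conv_lhs => rw [hsplit x, hsplit y, h]
    group
  have hdrop : (x⁻¹ * y).norm ≤ (x.toWord.drop n).length + (y.toWord.drop n).length := by
    rw [hxy]
    exact (norm_mul_le _ _).trans (by rw [norm_inv_eq]; exact add_le_add norm_mk_le norm_mk_le)
  simp only [List.length_drop] at hdrop
  unfold norm at *
  omega

theorem take_one_toWord_eq_of_norm_inv_mul_lt {x y : FreeGroup α} (h : (x⁻¹ * y).norm < x.norm) :
    x.toWord.take 1 = y.toWord.take 1 := by
  apply take_toWord_eq_of_le
  have := norm_le_add_norm_inv_mul y x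
  rw [norm_inv_mul_comm] at this
  omega

/-- Otherwise every point of the path lies in the branch at `g` containing `1` (the first letter
of `g⁻¹ * f j` never changes), but `g * h` does not. -/
theorem exists_norm_inv_mul_le_of_chain {S L : ℕ} (f : ℕ → FreeGroup α) {g h : FreeGroup α}
    (hstep : ∀ j < L, ((f j)⁻¹ * f (j + 1)).norm ≤ S) (h0 : f 0 = 1) (hL : f L = g * h)
    (hgh : (g * h).norm = g.norm + h.norm) : ∃ j ≤ L, ((f j)⁻¹ * g).norm ≤ S := by
  by_contra! hfar
  have hfar' (j : ℕ) (hj : j ≤ L) : S < (g⁻¹ * f j).norm := by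
    simpa [norm_inv_mul_comm] using hfar j hj
  have hbranch (j : ℕ) (hj : j ≤ L) : (g⁻¹ * f j).toWord.take 1 = g⁻¹.toWord.take 1 := by
    induction j with
    | zero => rw [h0, mul_one]
    | succ j ih =>
      rw [← ih (by omega)]
      refine (take_one_toWord_eq_of_norm_inv_mul_lt ?_).symm
      calc ((g⁻¹ * f j)⁻¹ * (g⁻¹ * f (j + 1))).norm = ((f j)⁻¹ * f (j + 1)).norm := by group
        _ < (g⁻¹ * f j).norm := (hstep j (by omega)).trans_lt (hfar' j (by omega))
  have hg := hfar' 0 (Nat.zero_le L)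
  have hh := hfar' L le_rfl
  rw [h0, mul_one] at hg
  rw [hL, inv_mul_cancel_left] at hh
  have hgh' := hbranch L le_rfl
  rw [hL, inv_mul_cancel_left] at hgh'
  have := two_mul_add_norm_inv_mul_le hgh'.symm (by omega) (by omega)
  rw [inv_inv, norm_inv_eq] at this
  omega

theorem finite_setOf_norm_eq [Finite α] (n : ℕ) : {g : FreeGroup α | g.norm = n}.Finite :=
  (List.finite_length_eq (α × Bool) n).preimage toWord_injective.injOn

theorem norm_map_le (f : FreeGroup α →* FreeGroup β) {S : ℕ} (hS : ∀ a, (f (of a)).norm ≤ S)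
    (g : FreeGroup α) : (f g).norm ≤ S * g.norm := by
  have hletter (x : α × Bool) : (f (mk [x])).norm ≤ S := by
    obtain ⟨a, _ | _⟩ := x
    · have : (mk [(a, false)] : FreeGroup α) = (of a)⁻¹ := by
        rw [of, inv_mk]
        rfl
      rw [this, _root_.map_inv, norm_inv_eq]
      exact hS a
    · exact hS a
  have hword (w : List (α × Bool)) : (f (mk w)).norm ≤ S * w.length := by
    induction w with
    | nil => simp [← one_eq_mk]
    | cons x w ih =>
      rw [← List.singleton_append, ← mul_mk, _root_.map_mul, List.length_append, mul_add,
        List.length_singleton, mul_one]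
      exact (norm_mul_le _ _).trans (add_le_add (hletter x) ih)
  have := hword g.toWord
  rwa [mk_toWord] at this

theorem exists_norm_map_le [Finite α] (f : FreeGroup α →* FreeGroup β) :
    ∃ S, ∀ g, (f g).norm ≤ S * g.norm := by
  obtain ⟨S, hS⟩ := (Set.finite_range fun a => (f (of a)).norm).bddAbove
  exact ⟨S, norm_map_le f fun a => hS ⟨a, rfl⟩⟩

/-- As `ψ` is a homomorphism, this says that `ψ` and `ψ⁻¹` are `S`-Lipschitz for the word
metric `d(x, y) = |x⁻¹ y|`. -/
def BilipschitzWith (S : ℕ) (ψ : FreeGroup α ≃* FreeGroup β) : Prop :=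
  (∀ g, (ψ g).norm ≤ S * g.norm) ∧ ∀ g, (ψ.symm g).norm ≤ S * g.norm

theorem exists_bilipschitzWith [Finite α] [Finite β] (ψ : FreeGroup α ≃* FreeGroup β) :
    ∃ S, BilipschitzWith S ψ := by
  obtain ⟨S₁, h₁⟩ := exists_norm_map_le ψ.toMonoidHom
  obtain ⟨S₂, h₂⟩ := exists_norm_map_le ψ.symm.toMonoidHom
  exact ⟨max S₁ S₂, fun g => (h₁ g).trans (Nat.mul_le_mul_right _ (le_max_left _ _)),
    fun g => (h₂ g).trans (Nat.mul_le_mul_right _ (le_max_right _ _))⟩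

namespace BilipschitzWith

variable {S : ℕ} {ψ : FreeGroup α ≃* FreeGroup β}

theorem symm (h : BilipschitzWith S ψ) : BilipschitzWith S ψ.symm :=
  ⟨h.2, by simpa using h.1⟩

theorem norm_le (h : BilipschitzWith S ψ) (g : FreeGroup α) : g.norm ≤ S * (ψ g).norm := by
  simpa using h.2 (ψ g)

theorem le_norm_apply [Nonempty α] (h : BilipschitzWith S ψ) {g : FreeGroup α} {k : ℕ}
    (hg : S * k ≤ g.norm) : k ≤ (ψ g).norm := by
  obtain ⟨a⟩ := ‹Nonempty α›
  have hS : 0 < S := Nat.pos_of_ne_zero fun hS => by simpa [hS] using h.norm_le (of a)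
  exact Nat.le_of_mul_le_mul_left (hg.trans (h.norm_le g)) hS

/-- Bounded cancellation: pulling back the prefixes of `ψ (g * k)` gives a path with jumps of
length at most `S` from `1` to `g * k`, which passes within `S` of `g`. -/
theorem norm_add_norm_le (h : BilipschitzWith S ψ) {g k : FreeGroup α}
    (hgk : (g * k).norm = g.norm + k.norm) :
    (ψ g).norm + (ψ k).norm ≤ (ψ (g * k)).norm + 2 * (S * S) := by
  set W := (ψ (g * k)).toWord
  have hstep (j : ℕ) (_ : j < W.length) :
      ((ψ.symm (mk (W.take j)))⁻¹ * ψ.symm (mk (W.take (j + 1)))).norm ≤ S := by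
    calc ((ψ.symm (mk (W.take j)))⁻¹ * ψ.symm (mk (W.take (j + 1)))).norm
        = (ψ.symm ((mk (W.take j))⁻¹ * mk (W.take (j + 1)))).norm := by
          rw [_root_.map_mul, _root_.map_inv]
      _ ≤ S * 1 := by
        refine (h.2 _).trans (Nat.mul_le_mul_left S ?_)
        rw [norm_inv_mul_mk_of_prefix (List.take_prefix_take_left (Nat.le_succ j))
          (isReduced_toWord.infix (W.take_prefix _).isInfix)]
        simp only [List.length_take]
        omega
      _ = S := mul_one S
  obtain ⟨j, hjL, hj⟩ := exists_norm_inv_mul_le_of_chain (fun j => ψ.symm (mk (W.take j)))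
    hstep (by simp [← one_eq_mk]) (by simp [W, mk_toWord]) hgk
  have hψg : ((mk (W.take j))⁻¹ * ψ g).norm ≤ S * S := by
    calc ((mk (W.take j))⁻¹ * ψ g).norm = (ψ ((ψ.symm (mk (W.take j)))⁻¹ * g)).norm := by simp
      _ ≤ S * S := (h.1 _).trans (Nat.mul_le_mul_left S hj)
  have hrest : ((mk (W.take j))⁻¹ * ψ (g * k)).norm = W.length - j := by
    conv_lhs => rw [← mk_toWord (x := ψ (g * k))]
    rw [norm_inv_mul_mk_of_prefix (W.take_prefix j) isReduced_toWord, List.length_take]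
    omega
  have hW : (mk (W.take j)).norm ≤ j := norm_mk_le.trans (List.length_take_le j W)
  have h₁ := norm_le_add_norm_inv_mul (mk (W.take j)) (ψ g)
  have h₂ := norm_inv_mul_le_add_norm_inv_mul (mk (W.take j)) (ψ g) (ψ (g * k))
  rw [_root_.map_mul ψ, inv_mul_cancel_left, ← _root_.map_mul ψ] at h₂
  have hnorm : (ψ (g * k)).norm = W.length := rfl
  omega

theorem take_toWord_eq_of_prefix (h : BilipschitzWith S ψ) {x y : FreeGroup α}
    (hxy : x.toWord <+: y.toWord) {n : ℕ} (hn : n + S * S ≤ (ψ x).norm) :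
    (ψ x).toWord.take n = (ψ y).toWord.take n := by
  have hdist : (x⁻¹ * y).norm = y.norm - x.norm := by
    have := norm_inv_mul_mk_of_prefix hxy isReduced_toWord
    rwa [mk_toWord, mk_toWord] at this
  have hbc := h.norm_add_norm_le (g := x) (k := x⁻¹ * y) (by
    rw [mul_inv_cancel_left, hdist]
    have := hxy.length_le
    unfold norm
    omega)
  rw [mul_inv_cancel_left] at hbc
  apply take_toWord_eq_of_le
  rw [← _root_.map_inv, ← _root_.map_mul]
  omega

end BilipschitzWith

end FreeGroup

section Boundary

variable {α : Type*}

theorem wpre_length (X : ℕ → α × Bool) (n : ℕ) : (wpre X n).length = n := by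
  simp [wpre]

theorem wpre_succ (X : ℕ → α × Bool) (n : ℕ) : wpre X (n + 1) = wpre X n ++ [X n] := by
  simp [wpre, List.range_succ]

theorem take_wpre (X : ℕ → α × Bool) {m n : ℕ} (h : n ≤ m) : (wpre X m).take n = wpre X n := by
  simp [wpre, ← List.map_take, List.take_range, Nat.min_eq_left h]

theorem wpre_prefix (X : ℕ → α × Bool) {m n : ℕ} (h : n ≤ m) : wpre X n <+: wpre X m := by
  rw [← take_wpre X h]
  exact List.take_prefix n _

theorem infRed_iff_forall_isReduced_wpre {X : ℕ → α × Bool} :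
    InfRed X ↔ ∀ n, FreeGroup.IsReduced (wpre X n) := by
  have hrel (x y : α × Bool) : y ≠ Linv x ↔ (x.1 = y.1 → x.2 = y.2) := by
    obtain ⟨x₁, _ | _⟩ := x <;> obtain ⟨y₁, _ | _⟩ := y <;> simp [Linv, eq_comm]
  have hchain (n : ℕ) :
      FreeGroup.IsReduced (wpre X (n + 1)) ↔ ∀ m < n, X (m + 1) ≠ Linv (X m) := by
    simp only [FreeGroup.IsReduced, wpre, List.isChain_map, hrel]
    exact List.isChain_range_succ _ n
  refine ⟨fun h n => ?_, fun h n => (hchain (n + 1)).mp (h (n + 2)) n (Nat.lt_succ_self n)⟩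
  cases n with
  | zero => exact List.isChain_nil
  | succ n => exact (hchain n).mpr fun m _ => h m

theorem exists_wpre_eq {L : ℕ → List (α × Bool)} (hlen : ∀ n, (L n).length = n)
    (hcoh : ∀ n, (L (n + 1)).take n = L n) : ∃ X, ∀ n, wpre X n = L n := by
  refine ⟨fun n => (L (n + 1))[n]'(by rw [hlen]; omega), fun n => ?_⟩
  induction n with
  | zero => exact (List.length_eq_zero_iff.mp (hlen 0)).symm
  | succ n ih =>
    rw [wpre_succ, ih, ← hcoh n, List.take_append_getElem, List.take_of_length_le (hlen _).le]

variable [DecidableEq α]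

theorem toWord_mk_wpre (X : Bdry α) (n : ℕ) : (mk (wpre X.1 n)).toWord = wpre X.1 n :=
  (infRed_iff_forall_isReduced_wpre.mp X.2 n).toWord_mk

theorem norm_mk_wpre (X : Bdry α) (n : ℕ) : (mk (wpre X.1 n)).norm = n := by
  rw [FreeGroup.norm, toWord_mk_wpre, wpre_length]

theorem mem_cylF_mk_wpre {X Y : Bdry α} {n : ℕ} :
    Y ∈ CylF (mk (wpre X.1 n)) ↔ wpre Y.1 n = wpre X.1 n := by
  rw [CylF, Set.mem_ofPred_eq, toWord_mk_wpre, wlen, toWord_mk_wpre, wpre_length]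

end Boundary

namespace FreeGroup.BilipschitzWith

variable {α : Type*} [DecidableEq α] {S : ℕ} {ψ : FreeGroup α ≃* FreeGroup α}

theorem le_norm_apply_mk_wpre (h : BilipschitzWith S ψ) (X : Bdry α) {m n : ℕ}
    (hm : S * (n + S * S) ≤ m) : n + S * S ≤ (ψ (mk (wpre X.1 m))).norm :=
  have : Nonempty α := ⟨(X.1 0).1⟩
  h.le_norm_apply (by rwa [norm_mk_wpre])

theorem take_toWord_apply_mk_wpre_eq (h : BilipschitzWith S ψ) (X : Bdry α) {m m' n : ℕ}
    (hm : S * (n + S * S) ≤ m) (hmm' : m ≤ m') :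
    (ψ (mk (wpre X.1 m'))).toWord.take n = (ψ (mk (wpre X.1 m))).toWord.take n := by
  refine (h.take_toWord_eq_of_prefix ?_ (h.le_norm_apply_mk_wpre X hm)).symm
  rw [toWord_mk_wpre, toWord_mk_wpre]
  exact wpre_prefix X.1 hmm'

theorem exists_limMap (h : BilipschitzWith S ψ) (X : Bdry α) : ∃ Y : Bdry α, LimMap ψ X.1 Y.1 := by
  set T : ℕ → ℕ := fun n => S * (n + S * S)
  set L : ℕ → List (α × Bool) := fun n => (ψ (mk (wpre X.1 (T n)))).toWord.take n
  have hlen (n : ℕ) : (L n).length = n := by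
    have := h.le_norm_apply_mk_wpre X (le_refl (T n))
    simp only [L, List.length_take, FreeGroup.norm] at this ⊢
    omega
  have hL (n m : ℕ) (hm : T n ≤ m) : (ψ (mk (wpre X.1 m))).toWord.take n = L n :=
    h.take_toWord_apply_mk_wpre_eq X le_rfl hm
  obtain ⟨Y, hY⟩ := exists_wpre_eq hlen fun n => by
    rw [List.take_take, Nat.min_eq_left (Nat.le_succ n)]
    exact hL n _ (Nat.mul_le_mul_left S (by omega))
  refine ⟨⟨Y, infRed_iff_forall_isReduced_wpre.mpr fun n => ?_⟩,
    fun n => ⟨T n, fun m hm => (hL n m hm).trans (hY n).symm⟩⟩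
  rw [hY]
  exact isReduced_toWord.infix (List.take_prefix _ _).isInfix

theorem take_toWord_eq_of_limMap (h : BilipschitzWith S ψ) {X : Bdry α} {Y : ℕ → α × Bool}
    (hXY : LimMap ψ X.1 Y) {m n : ℕ} (hm : S * (n + S * S) ≤ m) :
    (ψ (mk (wpre X.1 m))).toWord.take n = wpre Y n := by
  obtain ⟨m₀, hm₀⟩ := hXY n
  rw [← h.take_toWord_apply_mk_wpre_eq X hm (le_max_left m m₀)]
  exact hm₀ _ (le_max_right _ _)

/-- `Y|m` is a prefix of `ψ (X|t)` for large `t`, so `ψ⁻¹ (Y|m)` shares its first `n` letters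
with `X|t`. -/
theorem limMap_symm (h : BilipschitzWith S ψ) {X Y : Bdry α} (hXY : LimMap ψ X.1 Y.1) :
    LimMap ψ.symm Y.1 X.1 := by
  have : Nonempty α := ⟨(X.1 0).1⟩
  refine fun n => ⟨S * (n + S * S), fun m hm => ?_⟩
  obtain ⟨t₀, ht₀⟩ := hXY m
  have hprefix : (mk (wpre Y.1 m)).toWord <+: (ψ (mk (wpre X.1 (max t₀ n)))).toWord := by
    rw [toWord_mk_wpre, ← ht₀ _ (le_max_left t₀ n)]
    exact List.take_prefix _ _
  rw [h.symm.take_toWord_eq_of_prefix hprefix (h.symm.le_norm_apply (by rwa [norm_mk_wpre])),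
    MulEquiv.symm_apply_apply, toWord_mk_wpre, take_wpre _ (le_max_right t₀ n)]

theorem mem_bim_cylF_of_wpre_eq (h : BilipschitzWith S ψ) {u : FreeGroup α} {Y Y' : Bdry α}
    (hY : Y ∈ bim ψ (CylF u))
    (hYY' : wpre Y'.1 (S * (wlen u + S * S)) = wpre Y.1 (S * (wlen u + S * S))) :
    Y' ∈ bim ψ (CylF u) := by
  obtain ⟨X, hXu, hXY⟩ := hY
  obtain ⟨X', hX'⟩ := h.symm.exists_limMap Y'
  refine ⟨X', ?_, by simpa using h.symm.limMap_symm hX'⟩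
  change wpre X'.1 (wlen u) = u.toWord
  rw [← h.symm.take_toWord_eq_of_limMap hX' le_rfl, hYY',
    h.symm.take_toWord_eq_of_limMap (h.limMap_symm hXY) le_rfl]
  exact hXu

end FreeGroup.BilipschitzWith

theorem image_cylinder_is_finite_union_general
    (φ : FreeGroup A ≃* FreeGroup A) (u : FreeGroup A) :
    ∃ U : Finset (FreeGroup A),
      bim (fun g => φ g) (CylF u) = ⋃ u' ∈ U, CylF u' := by
  obtain ⟨S, hS⟩ := exists_bilipschitzWith φ
  set M := S * (wlen u + S * S)
  have hU : {v : FreeGroup A | v.norm = M ∧ CylF v ⊆ bim φ (CylF u)}.Finite :=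
    (finite_setOf_norm_eq M).subset fun v hv => hv.1
  refine ⟨hU.toFinset, Set.Subset.antisymm (fun Y hY => ?_) ?_⟩
  · refine Set.mem_biUnion (x := mk (wpre Y.1 M)) ?_ (mem_cylF_mk_wpre.mpr rfl)
    rw [Set.Finite.coe_toFinset]
    exact ⟨norm_mk_wpre Y M, fun Y' hY' => hS.mem_bim_cylF_of_wpre_eq hY (mem_cylF_mk_wpre.mp hY')⟩
  · simp only [Set.iUnion₂_subset_iff, Set.Finite.mem_toFinset]
    exact fun v hv => hv.2

theorem image_cylinder_is_finite_union (hA : 2 ≤ Fintype.card A)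
    (φ : FreeGroup A ≃* FreeGroup A) (u : FreeGroup A) :
    ∃ U : Finset (FreeGroup A),
      bim (fun g => φ g) (CylF u) = ⋃ u' ∈ U, CylF u' :=
  image_cylinder_is_finite_union_general φ u
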